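/- Let G be an r-regular simple graph with n vertices and m edges, where r ≥ 2 (so that m ≥ n), and let q_1 ≤ q_2 ≤ … ≤ q_n = 2r be the eigenvalues of Q(G) listed with multiplicity. Then f(λ, G^{+++}) = (λ-3r+2)(λ-4r)·(λ-2r+2)^{m-n}·∏_{i=1}^{n-1}[(λ-r-q_i)(λ-2r+2-q_i) - q_i]. -/

import Mathlib

open Classical

/-- The four symbols `0, 1, +, -` used in `xyz`-transformations. -/
inductive XYZ : Type
  | zero | one | plus | minus

namespace XYZ

/-- The relation on the vertices of a graph `H` given by a symbol:
`0` gives the empty graph, `1` the complete graph, `+` the graph itself,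
`-` its complement. -/
def rel {W : Type*} (H : SimpleGraph W) : XYZ → W → W → Prop
  | .zero => fun _ _ => False
  | .one  => fun u v => u ≠ v
  | .plus => fun u v => H.Adj u v
  | .minus => fun u v => u ≠ v ∧ ¬ H.Adj u v

/-- The incidence relation between a vertex and an edge given by a symbol `z`:
`+` means incident, `-` means non-incident, `0` never, `1` always. -/
def inc {W : Type*} (G : SimpleGraph W) : XYZ → W → G.edgeSet → Prop
  | .zero => fun _ _ => False
  | .one  => fun _ _ => True
  | .plus => fun v e => v ∈ (e : Sym2 W)
  | .minus => fun v e => v ∉ (e : Sym2 W)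

theorem rel_symm {W : Type*} (H : SimpleGraph W) (x : XYZ) {u v : W}
    (h : rel H x u v) : rel H x v u := by
  cases x with
  | zero => exact h.elim
  | one => exact (h : u ≠ v).symm
  | plus => exact H.adj_symm h
  | minus => exact ⟨(h.1).symm, fun h' => h.2 (H.adj_symm h')⟩

theorem rel_irrefl {W : Type*} (H : SimpleGraph W) (x : XYZ) {u : W}
    (h : rel H x u u) : False := by
  cases x with
  | zero => exact h
  | one => exact h rfl
  | plus => exact H.irrefl h
  | minus => exact h.1 rfl

end XYZ

/-- The `xyz`-transformation `G^{xyz}` of a graph `G`: its vertex set is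
`V(G) ⊕ E(G)`; two vertices of `G` are adjacent according to the symbol `x`
(applied to `G`), two edges according to the symbol `y` (applied to the line
graph of `G`), and a vertex and an edge according to the symbol `z`
(`+` = incidence graph `B(G)`, `-` = non-incidence graph `B^c(G)`,
`0` = no vertex-edge edges, `1` = all vertex-edge edges). -/
def xyzTransform {V : Type*} (G : SimpleGraph V) (x y z : XYZ) :
    SimpleGraph (V ⊕ G.edgeSet) where
  Adj a b :=
    match a, b with
    | Sum.inl u, Sum.inl v => XYZ.rel G x u v
    | Sum.inr e, Sum.inr f => XYZ.rel G.lineGraph y e f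
    | Sum.inl v, Sum.inr e => XYZ.inc G z v e
    | Sum.inr e, Sum.inl v => XYZ.inc G z v e
  symm := by
    constructor
    rintro (u | e) (v | f) h
    · exact XYZ.rel_symm G x h
    · exact h
    · exact h
    · exact XYZ.rel_symm G.lineGraph y h
  loopless := by
    constructor
    rintro (u | e) h
    · exact XYZ.rel_irrefl G x h
    · exact XYZ.rel_irrefl G.lineGraph y h

/-- The signless Laplacian matrix `Q(G) = D(G) + A(G)` of a graph. -/
noncomputable def signlessLaplacian {V : Type*} [Fintype V] (G : SimpleGraph V) :
    Matrix V V ℝ :=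
  Matrix.of fun u v =>
    (if u = v then (G.degree u : ℝ) else 0) + (if G.Adj u v then 1 else 0)

/-- The signless Laplacian characteristic polynomial
`f(λ, G) = det (λ I - Q(G))`, evaluated at a real number `λ`. -/
noncomputable def fQ {V : Type*} [Fintype V] (G : SimpleGraph V) (lam : ℝ) : ℝ :=
  Matrix.det (lam • (1 : Matrix V V ℝ) - signlessLaplacian G)

/-!
Let `B` be the vertex–edge incidence matrix of `G`, so that `B Bᵀ = Q(G)` and
`Bᵀ B = 2 I + A(L(G))`. Since `G^{+++}` is `2r`-regular,
`λ I - Q(G^{+++}) = [(λ - r) I - B Bᵀ, -B; -Bᵀ, s I - Bᵀ B]` with `s = λ - 2r + 2`.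
Right multiplication by `[s I - B Bᵀ, 0; Bᵀ, I]` makes this block triangular, whence
`f(λ, G^{+++}) f(s, G) = det((λ - r - Q)(s - Q) - Q) · det(s I - Bᵀ B)`, and
`det(s I - Bᵀ B) = s^{m-n} f(s, G)`. Over `ℂ` the quadratic matrix factors as
`(α - Q)(β - Q)`, so its determinant is `∏ ((λ - r - q_i)(s - q_i) - q_i)`. The common
factor `f(s, G)` may vanish at some `λ`, so it is cancelled in `ℝ[X]`. Finally the
eigenvalue `q_n = 2r` contributes `(λ - 3r + 2)(λ - 4r)`.
-/

open Finset Matrix Polynomial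

lemma Fin.prod_univ_eq_prod_castLE_mul_last {M : Type*} [CommMonoid M] {n : ℕ} (hn : 0 < n)
    (f : Fin n → M) :
    ∏ i, f i = (∏ i : Fin (n - 1), f (Fin.castLE (Nat.sub_le n 1) i)) * f ⟨n - 1, by omega⟩ := by
  obtain ⟨k, rfl⟩ : ∃ k, n = k + 1 := ⟨n - 1, by omega⟩
  exact Fin.prod_univ_castSucc f

lemma Polynomial.eq_of_forall_eval_mul_eq_eval_mul {R : Type*} [CommRing R] [IsDomain R]
    [Infinite R] {p q d : R[X]} (hd : d ≠ 0) (h : ∀ x, p.eval x * d.eval x = q.eval x * d.eval x) :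
    p = q :=
  mul_right_cancel₀ hd (Polynomial.funext fun x => by simp only [eval_mul, h])

lemma IsAlgClosed.exists_add_eq_and_mul_eq {K : Type*} [Field K] [IsAlgClosed K] (b c : K) :
    ∃ α β : K, α + β = b ∧ α * β = c := by
  obtain ⟨α, hα⟩ := IsAlgClosed.exists_root (C 1 * X ^ 2 + C (-b) * X + C c)
    (by rw [degree_quadratic one_ne_zero]; decide)
  refine ⟨α, b - α, by ring, ?_⟩
  simp only [IsRoot, eval_add, eval_mul, eval_C, eval_pow, eval_X] at hα
  linear_combination -hα

namespace Matrix

variable {R : Type*} [CommRing R] {m n ι : Type*} [Fintype m] [Fintype n] [DecidableEq m]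
  [DecidableEq n]

lemma eval_charpoly' (M : Matrix n n R) (t : R) : M.charpoly.eval t = (t • 1 - M).det := by
  rw [eval_charpoly, scalar_apply, smul_one_eq_diagonal]

lemma det_smul_one_sub_mul_comm (A : Matrix m n R) (B : Matrix n m R)
    (hle : Fintype.card n ≤ Fintype.card m) (s : R) :
    (s • 1 - A * B).det = s ^ (Fintype.card m - Fintype.card n) * (s • 1 - B * A).det := by
  rw [← eval_charpoly', ← eval_charpoly', charpoly_mul_comm_of_le A B hle, eval_mul, eval_pow,
    eval_X]

/-- Right multiplication by `fromBlocks (s • 1 - A * B) 0 B 1` makes the block matrix upper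
triangular. -/
lemma det_fromBlocks_mul_det_smul_one_sub (A : Matrix m n R) (B : Matrix n m R) (s t : R) :
    (fromBlocks (t • 1 - A * B) (-A) (-B) (s • 1 - B * A)).det * (s • 1 - A * B).det =
      ((t • 1 - A * B) * (s • 1 - A * B) - A * B).det * (s • 1 - B * A).det := by
  have htriangular : fromBlocks (t • 1 - A * B) (-A) (-B) (s • 1 - B * A) *
      fromBlocks (s • 1 - A * B) 0 B 1 =
        fromBlocks ((t • 1 - A * B) * (s • 1 - A * B) - A * B) (-A) 0 (s • 1 - B * A) := by
    simp only [fromBlocks_multiply, Matrix.mul_sub, Matrix.sub_mul, Matrix.mul_assoc,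
      Matrix.smul_mul, Matrix.mul_smul, Matrix.mul_one, Matrix.one_mul, Matrix.mul_zero,
      Matrix.neg_mul]
    congr 1 <;> module
  calc _ = (fromBlocks (t • 1 - A * B) (-A) (-B) (s • 1 - B * A) *
        fromBlocks (s • 1 - A * B) 0 B 1).det := by
        rw [det_mul, det_fromBlocks_zero₁₂, det_one, mul_one]
    _ = _ := by rw [htriangular, det_fromBlocks_zero₂₁]

variable [Fintype ι]

lemma det_quadratic_of_charpoly_eq_prod (M : Matrix n n R) (q : ι → R)
    (hχ : M.charpoly = ∏ i, (X - C (q i))) {s t α β : R} (hsum : α + β = s + t + 1)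
    (hprod : α * β = s * t) :
    ((t • 1 - M) * (s • 1 - M) - M).det = ∏ i, ((t - q i) * (s - q i) - q i) := by
  have hfactor : (t • 1 - M) * (s • 1 - M) - M = (α • 1 - M) * (β • 1 - M) := by
    simp only [Matrix.mul_sub, Matrix.sub_mul, Matrix.smul_mul, Matrix.mul_smul, Matrix.one_mul,
      Matrix.mul_one]
    linear_combination (norm := module) hsum • M - hprod • (1 : Matrix n n R)
  rw [hfactor, det_mul, ← eval_charpoly', ← eval_charpoly', hχ, eval_prod, eval_prod,
    ← prod_mul_distrib]
  refine prod_congr rfl fun i _ => ?_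
  simp only [eval_sub, eval_X, eval_C]
  linear_combination hprod - q i * hsum

lemma det_quadratic_of_charpoly_eq_prod_real (M : Matrix n n ℝ) (q : ι → ℝ)
    (hχ : M.charpoly = ∏ i, (X - C (q i))) (s t : ℝ) :
    ((t • 1 - M) * (s • 1 - M) - M).det = ∏ i, ((t - q i) * (s - q i) - q i) := by
  set f := algebraMap ℝ ℂ
  obtain ⟨α, β, hsum, hprod⟩ := IsAlgClosed.exists_add_eq_and_mul_eq (f s + f t + 1) (f s * f t)
  have hχℂ : (M.map f).charpoly = ∏ i, (X - C (f (q i))) := by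
    rw [charpoly_map, hχ, Polynomial.map_prod]
    simp
  apply f.injective
  simp only [RingHom.map_det, map_prod, map_sub, map_mul]
  rw [← det_quadratic_of_charpoly_eq_prod _ _ hχℂ hsum hprod]
  congr 1
  ext i j
  simp [Matrix.mul_apply, one_apply, apply_ite, f]

end Matrix

namespace SimpleGraph

lemma sum_adjMatrix_apply {V : Type*} [Fintype V] (G : SimpleGraph V) (v : V) :
    ∑ w, G.adjMatrix ℕ v w = G.degree v := by
  simp only [adjMatrix_apply]
  exact (degree_eq_sum_if_adj G v).symm

lemma IsRegularOfDegree.degMatrix_eq_smul_one {R V : Type*} [Fintype V] [DecidableEq V]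
    [NonAssocSemiring R] {G : SimpleGraph V} {d : ℕ} (hreg : G.IsRegularOfDegree d) :
    G.degMatrix R = (d : R) • 1 := by
  rw [degMatrix, funext fun v => congrArg ((↑) : ℕ → R) (hreg v), smul_one_eq_diagonal]

lemma IsRegularOfDegree.card_le_card_edgeSet {V : Type*} [Fintype V] {G : SimpleGraph V} {r : ℕ}
    (hreg : G.IsRegularOfDegree r) (hr : 2 ≤ r) : Fintype.card V ≤ Fintype.card G.edgeSet := by
  have h := G.sum_degrees_eq_twice_card_edges
  simp only [hreg _, sum_const, card_univ, smul_eq_mul, edgeFinset_card] at h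
  nlinarith

variable {V : Type*} (G : SimpleGraph V)

lemma sum_edgeSet_eq_sum [Fintype V] {M : Type*} [AddCommMonoid M] {f : Sym2 V → M}
    (hf : ∀ e ∉ G.edgeSet, f e = 0) : ∑ e : G.edgeSet, f e = ∑ e, f e := by
  rw [Finset.sum_set_coe]
  exact Finset.sum_subset (Finset.subset_univ _) fun e _ he => hf e (by simpa using he)

lemma _root_.Sym2.card_filter_mem_and_mem_le_one [Fintype V] [DecidableEq V] {e f : Sym2 V}
    (hef : e ≠ f) : #{v | v ∈ e ∧ v ∈ f} ≤ 1 := by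
  refine Finset.card_le_one.mpr fun a ha b hb => by_contra fun hab => hef ?_
  simp only [Finset.mem_filter, Finset.mem_univ, true_and] at ha hb
  rw [(Sym2.mem_and_mem_iff hab).mp ⟨ha.1, hb.1⟩, (Sym2.mem_and_mem_iff hab).mp ⟨ha.2, hb.2⟩]

lemma card_filter_mem_and_mem_eq_lineGraph_adj [Fintype V] [DecidableEq V] {e f : G.edgeSet}
    (hef : e ≠ f) :
    #{v | v ∈ (e : Sym2 V) ∧ v ∈ (f : Sym2 V)} = if G.lineGraph.Adj e f then 1 else 0 := by
  have hle := Sym2.card_filter_mem_and_mem_le_one (Subtype.coe_ne_coe.mpr hef)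
  split_ifs with hadj
  · obtain ⟨-, v, hv⟩ := lineGraph_adj_iff_exists.mp hadj
    have : 0 < #{v | v ∈ (e : Sym2 V) ∧ v ∈ (f : Sym2 V)} := Finset.card_pos.mpr ⟨v, by simpa⟩
    omega
  · refine Finset.card_eq_zero.mpr (Finset.filter_eq_empty_iff.mpr fun v _ hv => hadj ?_)
    exact lineGraph_adj_iff_exists.mpr ⟨hef, v, hv⟩

variable [DecidableEq V] (R : Type*)

/-- The biadjacency matrix of the incidence graph `B(G)`. -/
noncomputable def edgeIncMatrix [Zero R] [One R] : Matrix V G.edgeSet R :=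
  (G.incMatrix R).submatrix id (↑)

variable {R} [Semiring R]

lemma edgeIncMatrix_apply (v : V) (e : G.edgeSet) :
    G.edgeIncMatrix R v e = if v ∈ (e : Sym2 V) then 1 else 0 := by
  simp [edgeIncMatrix, incMatrix_apply', incidenceSet]

lemma adjMatrix_xyzTransform_ppp :
    (xyzTransform G .plus .plus .plus).adjMatrix R =
      fromBlocks (G.adjMatrix R) (G.edgeIncMatrix R) (G.edgeIncMatrix R)ᵀ
        (G.lineGraph.adjMatrix R) := by
  ext (u | e) (v | f) <;>
    simp only [adjMatrix_apply, fromBlocks_apply₁₁, fromBlocks_apply₁₂, fromBlocks_apply₂₁,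
      fromBlocks_apply₂₂, transpose_apply, edgeIncMatrix_apply] <;>
    exact if_congr Iff.rfl rfl rfl

variable [Fintype V]

lemma sum_edgeIncMatrix_col (e : G.edgeSet) : ∑ v, G.edgeIncMatrix R v e = 2 :=
  G.sum_incMatrix_apply_of_mem_edgeSet e.2

lemma sum_edgeIncMatrix_row (v : V) : ∑ e, G.edgeIncMatrix R v e = G.degree v := by
  rw [← G.sum_incMatrix_apply]
  exact G.sum_edgeSet_eq_sum (f := G.incMatrix R v) fun e he =>
    G.incMatrix_of_notMem_incidenceSet fun h => he h.1

lemma edgeIncMatrix_mul_transpose :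
    G.edgeIncMatrix R * (G.edgeIncMatrix R)ᵀ = G.degMatrix R + G.adjMatrix R := by
  have h : G.edgeIncMatrix R * (G.edgeIncMatrix R)ᵀ = G.incMatrix R * (G.incMatrix R)ᵀ := by
    ext u v
    simp only [mul_apply, transpose_apply]
    exact G.sum_edgeSet_eq_sum (f := fun e => G.incMatrix R u e * G.incMatrix R v e) fun e he => by
      rw [G.incMatrix_of_notMem_incidenceSet fun h => he h.1, zero_mul]
  ext u v
  rw [h, incMatrix_mul_transpose]
  by_cases huv : u = v
  · subst huv; simp [degMatrix]
  · simp [degMatrix, huv]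

lemma transpose_mul_edgeIncMatrix :
    (G.edgeIncMatrix R)ᵀ * G.edgeIncMatrix R = (2 : R) • 1 + G.lineGraph.adjMatrix R := by
  ext e f
  by_cases hef : e = f
  · subst hef
    have := G.incMatrix_transpose_mul_diag (R := R) (e := e)
    simp only [e.2, if_true] at this
    simpa [edgeIncMatrix, mul_apply] using this
  · simp only [mul_apply, transpose_apply, edgeIncMatrix_apply, ite_zero_mul_ite_zero, mul_one,
      Finset.sum_boole]
    rw [card_filter_mem_and_mem_eq_lineGraph_adj G hef]
    simp [hef]

lemma lineGraph_degree_add_two {r : ℕ} (hreg : G.IsRegularOfDegree r) (e : G.edgeSet) :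
    G.lineGraph.degree e + 2 = 2 * r :=
  calc G.lineGraph.degree e + 2 = ∑ f, ((G.edgeIncMatrix ℕ)ᵀ * G.edgeIncMatrix ℕ) e f := by
        simp only [transpose_mul_edgeIncMatrix, Matrix.add_apply, Matrix.smul_apply, one_apply,
          sum_add_distrib, sum_adjMatrix_apply]
        simp [add_comm]
    _ = ∑ v, G.edgeIncMatrix ℕ v e * G.degree v := by
        simp only [mul_apply, transpose_apply]
        rw [sum_comm]
        simp [← mul_sum, sum_edgeIncMatrix_row]
    _ = 2 * r := by simp [hreg _, ← sum_mul, sum_edgeIncMatrix_col]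

variable {G} in
lemma IsRegularOfDegree.xyzTransform_ppp {r : ℕ} (hreg : G.IsRegularOfDegree r) :
    (xyzTransform G .plus .plus .plus).IsRegularOfDegree (2 * r) := by
  rintro (u | e)
  all_goals rw [← sum_adjMatrix_apply, adjMatrix_xyzTransform_ppp, Fintype.sum_sum_type]
  · simp only [fromBlocks_apply₁₁, fromBlocks_apply₁₂, sum_adjMatrix_apply, sum_edgeIncMatrix_row,
      Nat.cast_id, hreg u, two_mul]
  · simp only [fromBlocks_apply₂₁, fromBlocks_apply₂₂, transpose_apply, sum_adjMatrix_apply,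
      sum_edgeIncMatrix_col, ← G.lineGraph_degree_add_two hreg e, add_comm]

end SimpleGraph

open SimpleGraph

section SignlessLaplacian

variable {V : Type*} [Fintype V] [DecidableEq V] (G : SimpleGraph V)

/-- Converts `fQ`, which is built on the classical `DecidableEq` instance, to an arbitrary one. -/
lemma fQ_eq_eval_charpoly (lam : ℝ) : fQ G lam = (signlessLaplacian G).charpoly.eval lam := by
  rw [eval_charpoly', fQ]
  congr!

lemma signlessLaplacian_eq_degMatrix_add_adjMatrix :
    signlessLaplacian G = G.degMatrix ℝ + G.adjMatrix ℝ := by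
  ext u v
  by_cases huv : u = v
  · subst huv; simp [signlessLaplacian, degMatrix]
  · simp [signlessLaplacian, degMatrix, huv, adjMatrix_apply]

lemma edgeIncMatrix_mul_transpose_eq_signlessLaplacian :
    G.edgeIncMatrix ℝ * (G.edgeIncMatrix ℝ)ᵀ = signlessLaplacian G := by
  rw [edgeIncMatrix_mul_transpose, signlessLaplacian_eq_degMatrix_add_adjMatrix]

lemma smul_one_sub_signlessLaplacian_xyzTransform_ppp {r : ℕ} (hreg : G.IsRegularOfDegree r)
    (lam : ℝ) :
    lam • 1 - signlessLaplacian (xyzTransform G .plus .plus .plus) =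
      fromBlocks ((lam - r) • 1 - G.edgeIncMatrix ℝ * (G.edgeIncMatrix ℝ)ᵀ) (-G.edgeIncMatrix ℝ)
        (-(G.edgeIncMatrix ℝ)ᵀ)
        ((lam - 2 * r + 2) • 1 - (G.edgeIncMatrix ℝ)ᵀ * G.edgeIncMatrix ℝ) := by
  rw [signlessLaplacian_eq_degMatrix_add_adjMatrix, edgeIncMatrix_mul_transpose,
    hreg.xyzTransform_ppp.degMatrix_eq_smul_one, hreg.degMatrix_eq_smul_one,
    adjMatrix_xyzTransform_ppp, transpose_mul_edgeIncMatrix, ← fromBlocks_one, fromBlocks_smul,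
    fromBlocks_smul, fromBlocks_add, sub_eq_add_neg, fromBlocks_neg, fromBlocks_add]
  simp only [smul_zero, zero_add]
  congr 1 <;> push_cast <;> module

lemma fQ_xyzTransform_ppp_mul_fQ {r : ℕ} (hreg : G.IsRegularOfDegree r)
    (hle : Fintype.card V ≤ Fintype.card G.edgeSet) {ι : Type*} [Fintype ι] (q : ι → ℝ)
    (hχ : (signlessLaplacian G).charpoly = ∏ i, (X - C (q i))) (lam : ℝ) :
    fQ (xyzTransform G .plus .plus .plus) lam * fQ G (lam - 2 * r + 2) =
      ((lam - 2 * r + 2) ^ (Fintype.card G.edgeSet - Fintype.card V) *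
          ∏ i, ((lam - r - q i) * (lam - 2 * r + 2 - q i) - q i)) * fQ G (lam - 2 * r + 2) := by
  rw [fQ_eq_eval_charpoly, fQ_eq_eval_charpoly, eval_charpoly', eval_charpoly',
    smul_one_sub_signlessLaplacian_xyzTransform_ppp G hreg,
    ← edgeIncMatrix_mul_transpose_eq_signlessLaplacian, det_fromBlocks_mul_det_smul_one_sub,
    det_smul_one_sub_mul_comm _ _ hle, edgeIncMatrix_mul_transpose_eq_signlessLaplacian,
    det_quadratic_of_charpoly_eq_prod_real _ q hχ]
  ring

theorem fQ_xyzTransform_ppp {r : ℕ} (hreg : G.IsRegularOfDegree r)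
    (hle : Fintype.card V ≤ Fintype.card G.edgeSet) {ι : Type*} [Fintype ι] (q : ι → ℝ)
    (hχ : (signlessLaplacian G).charpoly = ∏ i, (X - C (q i))) (lam : ℝ) :
    fQ (xyzTransform G .plus .plus .plus) lam =
      (lam - 2 * r + 2) ^ (Fintype.card G.edgeSet - Fintype.card V) *
        ∏ i, ((lam - r - q i) * (lam - 2 * r + 2 - q i) - q i) := by
  set P : ℝ[X] := (X + C (2 - 2 * r : ℝ)) ^ (Fintype.card G.edgeSet - Fintype.card V) *
    ∏ i, ((X - C (r : ℝ) - C (q i)) * (X + C (2 - 2 * r : ℝ) - C (q i)) - C (q i))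
  have hshift (x : ℝ) : x + (2 - 2 * r) = x - 2 * r + 2 := by ring
  have hP : (signlessLaplacian (xyzTransform G .plus .plus .plus)).charpoly = P := by
    refine eq_of_forall_eval_mul_eq_eval_mul
      ((charpoly_monic (signlessLaplacian G)).comp_X_add_C (2 - 2 * r : ℝ)).ne_zero fun x => ?_
    simp only [P, eval_comp, eval_mul, eval_pow, eval_prod, eval_add, eval_sub, eval_X, eval_C,
      hshift, ← fQ_eq_eval_charpoly]
    exact fQ_xyzTransform_ppp_mul_fQ G hreg hle q hχ x
  simp only [fQ_eq_eval_charpoly, hP, P, eval_mul, eval_pow, eval_prod, eval_add, eval_sub, eval_X,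
    eval_C, hshift]

end SignlessLaplacian

theorem signless_charpoly_xyz_ppp {V : Type*} [Fintype V] (G : SimpleGraph V) (r n m : ℕ)
    (hn : Fintype.card V = n) (hm : Fintype.card G.edgeSet = m)
    (hreg : G.IsRegularOfDegree r) (hr2 : 2 ≤ r) (hn0 : 0 < n)
    (q : Fin n → ℝ)
    (hlast : q ⟨n - 1, by omega⟩ = 2 * r)
    (hq : ∀ x : ℝ, fQ G x = ∏ i : Fin n, (x - q i)) :
    ∀ lam : ℝ,
      fQ (xyzTransform G XYZ.plus XYZ.plus XYZ.plus) lam =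
        (lam - 3 * r + 2) * (lam - 4 * r) * (lam - 2 * r + 2) ^ (m - n) *
          ∏ i : Fin (n - 1), ((lam - r - (q (Fin.castLE (Nat.sub_le n 1) i))) * (lam - 2 * r + 2 - (q (Fin.castLE (Nat.sub_le n 1) i))) - (q (Fin.castLE (Nat.sub_le n 1) i))) := by
  have hχ : (signlessLaplacian G).charpoly = ∏ i, (X - C (q i)) :=
    Polynomial.funext fun x => by simp [← fQ_eq_eval_charpoly, hq, eval_prod]
  intro lam
  rw [fQ_xyzTransform_ppp G hreg (hreg.card_le_card_edgeSet hr2) q hχ, hn, hm,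
    Fin.prod_univ_eq_prod_castLE_mul_last hn0, hlast]
  ring
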